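/- If the Hermitian matrix 2γM + C is positive definite, then γ (regarded as a complex number) is an eigenvalue of A, and every eigenvalue λ of A satisfies Re λ ≤ γ; consequently γ equals the spectral abscissa sup{Re λ : λ ∈ σ(A)}. -/

import Mathlib

/-!
The spectrum of `A` is the zero set of `λ ↦ det (λ²M + λC + K)`: a block shear turns `λ - A`
into a block-triangular matrix. If `K(λ)x = 0` with `x ≠ 0`, then `λ` is a root of the scalar
quadratic `m(x)t² + c(x)t + k(x)`, so `Re λ ≤ r(x) ≤ γ`. Conversely, `r` is invariant under
scaling and continuous away from `0`, so the supremum `γ` is attained at some `x₀` on the unit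
sphere. As `r ≤ γ` everywhere, `K(γ)` is positive semidefinite; as `2γ m(x₀) + c(x₀) > 0`, the
value `γ` is the larger real root at `x₀`, so `x₀* K(γ) x₀ = 0` and hence `K(γ) x₀ = 0`.
-/

open Matrix
open scoped ComplexOrder

noncomputable section

/-- The value `x* P x` (which is real for Hermitian `P`), taken as its real part. -/
def qf {n : ℕ} (P : Matrix (Fin n) (Fin n) ℂ) (x : Fin n → ℂ) : ℝ :=
  (star x ⬝ᵥ P.mulVec x).re

/-- The (positive semidefinite) square root of a positive semidefinite matrix,
extended by `0` to all matrices. -/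
def msqrt {n : ℕ} (P : Matrix (Fin n) (Fin n) ℂ) : Matrix (Fin n) (Fin n) ℂ :=
  open scoped Classical in
  if h : P.PosSemidef then
    (h.1.eigenvectorUnitary : Matrix (Fin n) (Fin n) ℂ) *
      diagonal ((↑) ∘ (√·) ∘ h.1.eigenvalues) *
      (star h.1.eigenvectorUnitary : Matrix (Fin n) (Fin n) ℂ)
  else 0

/-- The quadratic matrix pencil `K(λ) = λ²M + λC + K`. -/
def Kpen {n : ℕ} (M C K : Matrix (Fin n) (Fin n) ℂ) (lam : ℂ) :
    Matrix (Fin n) (Fin n) ℂ :=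
  lam ^ 2 • M + lam • C + K

/-- The real part of the `+`-root of the scalar quadratic
`m(x) λ² + c(x) λ + k(x) = 0`. -/
def rfun {n : ℕ} (M C K : Matrix (Fin n) (Fin n) ℂ) (x : Fin n → ℂ) : ℝ :=
  open scoped Classical in
  if (qf C x) ^ 2 ≥ 4 * qf M x * qf K x then
    (-(qf C x) + Real.sqrt ((qf C x) ^ 2 - 4 * qf M x * qf K x)) / (2 * qf M x)
  else
    -(qf C x) / (2 * qf M x)

/-- The spectral-shift bound `γ = sup_{x ≠ 0} Re p₊(x)`. -/
def gam {n : ℕ} (M C K : Matrix (Fin n) (Fin n) ℂ) : ℝ :=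
  sSup {y : ℝ | ∃ x : Fin n → ℂ, x ≠ 0 ∧ rfun M C K x = y}

/-- The phase-space matrix `A = [[0, K½ M⁻½], [−M⁻½ K½, −M⁻½ C M⁻½]]`. -/
def phaseA {n : ℕ} (M C K : Matrix (Fin n) (Fin n) ℂ) :
    Matrix (Fin n ⊕ Fin n) (Fin n ⊕ Fin n) ℂ :=
  fromBlocks 0 (msqrt K * (msqrt M)⁻¹)
    (-((msqrt M)⁻¹ * msqrt K)) (-((msqrt M)⁻¹ * C * (msqrt M)⁻¹))

/-- The operator norm of a matrix with respect to the Euclidean norm. -/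
def opNorm {m : Type*} [Fintype m] [DecidableEq m] (A : Matrix m m ℂ) : ℝ :=
  ‖toEuclideanCLM (𝕜 := ℂ) A‖

/-- The block matrix `L(μ) = [[K½ K(μ)⁻½, 0], [μ M½ K(μ)⁻½, I]]`. -/
def Lmat {n : ℕ} (M C K : Matrix (Fin n) (Fin n) ℂ) (mu : ℝ) :
    Matrix (Fin n ⊕ Fin n) (Fin n ⊕ Fin n) ℂ :=
  fromBlocks (msqrt K * (msqrt (Kpen M C K (mu : ℂ)))⁻¹) 0
    ((mu : ℂ) • (msqrt M * (msqrt (Kpen M C K (mu : ℂ)))⁻¹)) 1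

section BlockDet

variable {ι : Type*} [Fintype ι] [DecidableEq ι]

theorem det_fromBlocks_zero₁₁ {R : Type*} [CommRing R] (B C D : Matrix ι ι R) :
    (fromBlocks 0 B C D).det = (-B).det * C.det := by
  have hJ : (fromBlocks 0 1 (-1) 0 : Matrix (ι ⊕ ι) (ι ⊕ ι) R).det = 1 := by
    have : (fromBlocks 0 1 (-1) 0 : Matrix (ι ⊕ ι) (ι ⊕ ι) R) =
        fromBlocks 1 1 0 1 * fromBlocks 1 0 (-1) 1 * fromBlocks 1 1 0 1 := by
      simp [fromBlocks_multiply]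
    rw [this, det_mul, det_mul, det_fromBlocks_zero₂₁, det_fromBlocks_zero₁₂]
    simp
  have hrot : fromBlocks 0 B C D * fromBlocks 0 1 (-1) 0 = fromBlocks (-B) 0 (-D) C := by
    simp [fromBlocks_multiply]
  simpa [hJ, det_fromBlocks_zero₁₂] using congrArg det hrot

theorem sq_det_mul_det_smul_one_sub_fromBlocks {𝕜 : Type*} [Field 𝕜] {S T : Matrix ι ι 𝕜}
    (hS : IsUnit S.det) (hT : IsUnit T.det) (C : Matrix ι ι 𝕜) (lam : 𝕜) :
    S.det ^ 2 * (lam • 1 - fromBlocks 0 (T * S⁻¹) (-(S⁻¹ * T)) (-(S⁻¹ * C * S⁻¹))).det =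
      (lam ^ 2 • (S * S) + lam • C + T * T).det := by
  have hshear : (lam • 1 - fromBlocks 0 (T * S⁻¹) (-(S⁻¹ * T)) (-(S⁻¹ * C * S⁻¹))) *
      fromBlocks 1 0 (lam • (S * T⁻¹)) 1 =
      fromBlocks 0 (-(T * S⁻¹)) (S⁻¹ * (lam ^ 2 • (S * S) + lam • C + T * T) * T⁻¹)
        (lam • 1 + S⁻¹ * C * S⁻¹) := by
    rw [← fromBlocks_one, fromBlocks_smul, sub_eq_add_neg, fromBlocks_neg, fromBlocks_add,
      fromBlocks_multiply]
    congr 1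
    · simp [Matrix.mul_assoc, nonsing_inv_mul_cancel_left _ _ hS, mul_nonsing_inv _ hT]
    · simp
    · simp [Matrix.mul_add, Matrix.add_mul, Matrix.mul_assoc,
        nonsing_inv_mul_cancel_left _ _ hS, mul_nonsing_inv _ hT, smul_smul, pow_two]
      abel
    · simp
  have := congrArg det hshear
  rw [det_mul, det_fromBlocks_zero₁₂, det_one, mul_one, mul_one,
    det_fromBlocks_zero₁₁, neg_neg] at this
  simp only [det_mul, det_nonsing_inv, Ring.inverse_eq_inv] at this
  rw [this]
  field_simp [hS.ne_zero, hT.ne_zero]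

end BlockDet

section QuadraticForm

variable {n : ℕ}

theorem qf_add (P Q : Matrix (Fin n) (Fin n) ℂ) (x : Fin n → ℂ) :
    qf (P + Q) x = qf P x + qf Q x := by
  simp [qf, add_mulVec]

theorem qf_ofReal_smul_left (r : ℝ) (P : Matrix (Fin n) (Fin n) ℂ) (x : Fin n → ℂ) :
    qf ((r : ℂ) • P) x = r * qf P x := by
  simp [qf, smul_mulVec]

theorem qf_ofReal_smul_right (P : Matrix (Fin n) (Fin n) ℂ) (t : ℝ) (x : Fin n → ℂ) :
    qf P ((t : ℂ) • x) = t ^ 2 * qf P x := by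
  simp only [qf, Complex.coe_smul, star_smul, star_trivial, mulVec_smul, dotProduct_smul,
    smul_dotProduct, Complex.real_smul, Complex.mul_re, Complex.ofReal_re, Complex.ofReal_im,
    zero_mul, sub_zero]
  ring

theorem qf_Kpen_ofReal (M C K : Matrix (Fin n) (Fin n) ℂ) (t : ℝ) (x : Fin n → ℂ) :
    qf (Kpen M C K t) x = qf M x * t ^ 2 + qf C x * t + qf K x := by
  rw [Kpen, ← Complex.ofReal_pow, qf_add, qf_add, qf_ofReal_smul_left, qf_ofReal_smul_left]
  ring

@[fun_prop]
theorem continuous_qf (P : Matrix (Fin n) (Fin n) ℂ) : Continuous (qf P) := by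
  unfold qf
  fun_prop

theorem Matrix.IsHermitian.star_dotProduct_mulVec_eq_qf {P : Matrix (Fin n) (Fin n) ℂ}
    (hP : P.IsHermitian) (x : Fin n → ℂ) : star x ⬝ᵥ P *ᵥ x = qf P x :=
  Complex.ext rfl (hP.im_star_dotProduct_mulVec_self x)

theorem Matrix.PosDef.qf_pos {P : Matrix (Fin n) (Fin n) ℂ} (hP : P.PosDef) {x : Fin n → ℂ}
    (hx : x ≠ 0) : 0 < qf P x :=
  (Complex.lt_def.mp (hP.dotProduct_mulVec_pos hx)).1

end QuadraticForm

section QuadraticRoot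

/-- Since `√` of a negative discriminant is `0`, this is the largest real part of a root of
`a t² + b t + c` in every case. -/
def quadRootRe (a b c : ℝ) : ℝ :=
  (-b + √(b ^ 2 - 4 * a * c)) / (2 * a)

theorem quadRootRe_smul {s : ℝ} (hs : 0 < s) (a b c : ℝ) :
    quadRootRe (s * a) (s * b) (s * c) = quadRootRe a b c := by
  have hdisc : √((s * b) ^ 2 - 4 * (s * a) * (s * c)) = s * √(b ^ 2 - 4 * a * c) := by
    rw [show (s * b) ^ 2 - 4 * (s * a) * (s * c) = s ^ 2 * (b ^ 2 - 4 * a * c) by ring,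
      Real.sqrt_mul (by positivity), Real.sqrt_sq hs.le]
  rw [quadRootRe, quadRootRe, hdisc, ← mul_neg, ← mul_add, mul_left_comm,
    mul_div_mul_left _ _ hs.ne']

variable {a b c : ℝ}

theorem quadratic_nonneg_of_quadRootRe_le (ha : 0 < a) {t : ℝ} (ht : quadRootRe a b c ≤ t) :
    0 ≤ a * t ^ 2 + b * t + c := by
  rw [quadRootRe, div_le_iff₀ (by positivity)] at ht
  rcases le_or_gt (b ^ 2 - 4 * a * c) 0 with hd | hd
  · nlinarith [sq_nonneg (2 * a * t + b)]
  · nlinarith [Real.sq_sqrt hd.le, Real.sqrt_nonneg (b ^ 2 - 4 * a * c)]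

theorem quadratic_eq_zero_of_quadRootRe_eq (ha : 0 < a) {t : ℝ} (ht : quadRootRe a b c = t)
    (hpos : 0 < 2 * a * t + b) : a * t ^ 2 + b * t + c = 0 := by
  rw [quadRootRe, div_eq_iff (by positivity)] at ht
  have hd : 0 < b ^ 2 - 4 * a * c := Real.sqrt_pos.mp (by linarith)
  have := Real.sq_sqrt hd.le
  have h4a : 4 * a * (a * t ^ 2 + b * t + c) = 0 := by nlinarith
  simpa [ha.ne'] using h4a

theorem re_le_quadRootRe (ha : 0 < a) {z : ℂ} (hz : a * z ^ 2 + b * z + c = 0) :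
    z.re ≤ quadRootRe a b c := by
  have hre : a * (z.re ^ 2 - z.im ^ 2) + b * z.re + c = 0 := by
    simpa [sq] using congrArg Complex.re hz
  have him : z.im * (2 * a * z.re + b) = 0 := by
    have := congrArg Complex.im hz
    simp only [sq, Complex.add_im, Complex.mul_im, Complex.ofReal_re, Complex.ofReal_im,
      Complex.mul_re, zero_mul, add_zero, Complex.zero_im] at this
    linear_combination this
  rw [quadRootRe, le_div_iff₀ (by positivity)]
  rcases mul_eq_zero.mp him with hreal | hvertex
  · have hd : b ^ 2 - 4 * a * c = (2 * a * z.re + b) ^ 2 := by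
      rw [hreal] at hre
      linear_combination (-4 * a) * hre
    rw [hd, Real.sqrt_sq_eq_abs]
    linarith [le_abs_self (2 * a * z.re + b)]
  · linarith [Real.sqrt_nonneg (b ^ 2 - 4 * a * c)]

end QuadraticRoot

section Rayleigh

variable {n : ℕ} {M C K : Matrix (Fin n) (Fin n) ℂ}

theorem rfun_eq_quadRootRe (M C K : Matrix (Fin n) (Fin n) ℂ) (x : Fin n → ℂ) :
    rfun M C K x = quadRootRe (qf M x) (qf C x) (qf K x) := by
  rw [rfun, quadRootRe]
  split_ifs with h
  · rfl
  · rw [Real.sqrt_eq_zero'.mpr (by linarith), add_zero]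

theorem rfun_ofReal_smul (M C K : Matrix (Fin n) (Fin n) ℂ) {t : ℝ} (ht : t ≠ 0)
    (x : Fin n → ℂ) : rfun M C K ((t : ℂ) • x) = rfun M C K x := by
  simp only [rfun_eq_quadRootRe, qf_ofReal_smul_right]
  exact quadRootRe_smul (by positivity) _ _ _

theorem continuousOn_rfun (hM : M.PosDef) : ContinuousOn (rfun M C K) {x | x ≠ 0} := by
  simp only [funext (rfun_eq_quadRootRe M C K), quadRootRe]
  exact ContinuousOn.div (by fun_prop) (by fun_prop) fun x hx => by
    have := hM.qf_pos hx
    positivity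

theorem isGreatest_gam [Nonempty (Fin n)] (hM : M.PosDef) :
    IsGreatest {y : ℝ | ∃ x : Fin n → ℂ, x ≠ 0 ∧ rfun M C K x = y} (gam M C K) := by
  have hsphere : Metric.sphere (0 : Fin n → ℂ) 1 ⊆ {x | x ≠ 0} := fun x hx h0 => by
    simp [h0] at hx
  obtain ⟨x₀, hx₀, hmax⟩ := (isCompact_sphere (0 : Fin n → ℂ) 1).exists_isMaxOn
    (NormedSpace.sphere_nonempty.mpr zero_le_one) ((continuousOn_rfun hM).mono hsphere)
  suffices h : IsGreatest {y | ∃ x : Fin n → ℂ, x ≠ 0 ∧ rfun M C K x = y} (rfun M C K x₀) by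
    rwa [gam, h.csSup_eq]
  refine ⟨⟨x₀, hsphere hx₀, rfl⟩, ?_⟩
  rintro _ ⟨x, hx, rfl⟩
  have hnorm : ‖x‖ ≠ 0 := norm_ne_zero_iff.mpr hx
  have hunit : ((‖x‖⁻¹ : ℝ) : ℂ) • x ∈ Metric.sphere (0 : Fin n → ℂ) 1 := by
    simp [norm_smul, hnorm]
  rw [← rfun_ofReal_smul M C K (inv_ne_zero hnorm) x]
  exact hmax hunit

end Rayleigh

section Pencil

variable {n : ℕ} {M C K : Matrix (Fin n) (Fin n) ℂ}

theorem star_dotProduct_Kpen_mulVec (hM : M.IsHermitian) (hC : C.IsHermitian)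
    (hK : K.IsHermitian) (lam : ℂ) (x : Fin n → ℂ) :
    star x ⬝ᵥ Kpen M C K lam *ᵥ x = qf M x * lam ^ 2 + qf C x * lam + qf K x := by
  simp only [Kpen, add_mulVec, smul_mulVec, dotProduct_add, dotProduct_smul, smul_eq_mul,
    hM.star_dotProduct_mulVec_eq_qf, hC.star_dotProduct_mulVec_eq_qf,
    hK.star_dotProduct_mulVec_eq_qf]
  ring

theorem isHermitian_Kpen_ofReal (hM : M.IsHermitian) (hC : C.IsHermitian) (hK : K.IsHermitian)
    (t : ℝ) : (Kpen M C K t).IsHermitian := by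
  rw [Kpen, ← Complex.ofReal_pow]
  exact ((hM.smul (Complex.conj_ofReal _)).add (hC.smul (Complex.conj_ofReal _))).add hK

theorem re_le_rfun_of_Kpen_mulVec_eq_zero (hM : M.PosDef) (hC : C.IsHermitian)
    (hK : K.IsHermitian) {lam : ℂ} {x : Fin n → ℂ} (hx : x ≠ 0)
    (hKx : Kpen M C K lam *ᵥ x = 0) : lam.re ≤ rfun M C K x := by
  have hroot := star_dotProduct_Kpen_mulVec hM.isHermitian hC hK lam x
  rw [hKx, dotProduct_zero] at hroot
  rw [rfun_eq_quadRootRe]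
  exact re_le_quadRootRe (hM.qf_pos hx) (by linear_combination -hroot)

theorem posSemidef_Kpen_of_rfun_le (hM : M.PosDef) (hC : C.IsHermitian) (hK : K.IsHermitian)
    {t : ℝ} (ht : ∀ x ≠ 0, rfun M C K x ≤ t) : (Kpen M C K t).PosSemidef := by
  refine .of_dotProduct_mulVec_nonneg (isHermitian_Kpen_ofReal hM.isHermitian hC hK t)
    fun x => ?_
  rcases eq_or_ne x 0 with rfl | hx
  · simp
  rw [(isHermitian_Kpen_ofReal hM.isHermitian hC hK t).star_dotProduct_mulVec_eq_qf,
    Complex.zero_le_real, qf_Kpen_ofReal]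
  have := ht x hx
  rw [rfun_eq_quadRootRe] at this
  exact quadratic_nonneg_of_quadRootRe_le (hM.qf_pos hx) this

theorem Kpen_mulVec_eq_zero_of_rfun_eq (hM : M.PosDef) (hC : C.IsHermitian)
    (hK : K.IsHermitian) {t : ℝ} (ht : ∀ x ≠ 0, rfun M C K x ≤ t) {x₀ : Fin n → ℂ}
    (hx₀ : x₀ ≠ 0) (hmax : rfun M C K x₀ = t) (hpos : 0 < qf (((2 * t : ℝ) : ℂ) • M + C) x₀) :
    Kpen M C K t *ᵥ x₀ = 0 := by
  rw [← (posSemidef_Kpen_of_rfun_le hM hC hK ht).dotProduct_mulVec_zero_iff,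
    (isHermitian_Kpen_ofReal hM.isHermitian hC hK t).star_dotProduct_mulVec_eq_qf,
    Complex.ofReal_eq_zero, qf_Kpen_ofReal]
  rw [rfun_eq_quadRootRe] at hmax
  rw [qf_add, qf_ofReal_smul_left] at hpos
  exact quadratic_eq_zero_of_quadRootRe_eq (hM.qf_pos hx₀) hmax (by linarith)

end Pencil

section PhaseSpace

variable {n : ℕ}

theorem msqrt_mul_self {P : Matrix (Fin n) (Fin n) ℂ} (hP : P.PosSemidef) :
    msqrt P * msqrt P = P := by
  set U : Matrix (Fin n) (Fin n) ℂ := (hP.1.eigenvectorUnitary : Matrix (Fin n) (Fin n) ℂ)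
  have hUU : star U * U = 1 := Unitary.coe_star_mul_self _
  have hD : diagonal (((↑) ∘ (√·) ∘ hP.1.eigenvalues : Fin n → ℂ)) *
      diagonal ((↑) ∘ (√·) ∘ hP.1.eigenvalues) = diagonal (RCLike.ofReal ∘ hP.1.eigenvalues) := by
    rw [diagonal_mul_diagonal]
    congr 1
    funext i
    simp [← Complex.ofReal_mul, Real.mul_self_sqrt (hP.eigenvalues_nonneg i)]
  conv_rhs => rw [hP.1.spectral_theorem, Unitary.conjStarAlgAut_apply]
  rw [msqrt, dif_pos hP]
  simp only [Matrix.mul_assoc]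
  rw [← Matrix.mul_assoc (star U), hUU, Matrix.one_mul,
    ← Matrix.mul_assoc (diagonal _) (diagonal _), hD]

theorem isUnit_det_msqrt {P : Matrix (Fin n) (Fin n) ℂ} (hP : P.PosDef) :
    IsUnit (msqrt P).det := by
  have hsq : (msqrt P).det * (msqrt P).det = P.det := by
    rw [← det_mul, msqrt_mul_self hP.posSemidef]
  exact isUnit_iff_ne_zero.mpr fun h0 => hP.det_pos.ne' (by rw [← hsq, h0, zero_mul])

theorem mem_spectrum_phaseA_iff {M K : Matrix (Fin n) (Fin n) ℂ} (hM : M.PosDef)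
    (hK : K.PosDef) (C : Matrix (Fin n) (Fin n) ℂ) (lam : ℂ) :
    lam ∈ spectrum ℂ (phaseA M C K) ↔ (Kpen M C K lam).det = 0 := by
  have hS := isUnit_det_msqrt hM
  have hdet := sq_det_mul_det_smul_one_sub_fromBlocks hS (isUnit_det_msqrt hK) C lam
  rw [msqrt_mul_self hM.posSemidef, msqrt_mul_self hK.posSemidef] at hdet
  rw [spectrum.mem_iff, Algebra.algebraMap_eq_smul_one, isUnit_iff_isUnit_det,
    isUnit_iff_ne_zero, not_not, Kpen, ← hdet, phaseA]
  simp [hS.ne_zero]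

end PhaseSpace

/-- If `2γM + C` is positive definite, then `γ` is an eigenvalue of `A`, every
eigenvalue of `A` has real part at most `γ`, and `γ` is the spectral abscissa. -/
theorem gamma_spectral_abscissa {n : ℕ} (hn : 1 ≤ n)
    (M C K : Matrix (Fin n) (Fin n) ℂ)
    (hM : M.PosDef) (hC : C.PosDef) (hK : K.PosDef)
    (h : (((2 * gam M C K : ℝ) : ℂ) • M + C).PosDef) :
    ((gam M C K : ℝ) : ℂ) ∈ spectrum ℂ (phaseA M C K) ∧
      (∀ lam ∈ spectrum ℂ (phaseA M C K), lam.re ≤ gam M C K) ∧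
      gam M C K = sSup {r : ℝ | ∃ lam ∈ spectrum ℂ (phaseA M C K), lam.re = r} := by
  have : Nonempty (Fin n) := ⟨⟨0, hn⟩⟩
  obtain ⟨⟨x₀, hx₀, hmax⟩, hub⟩ := isGreatest_gam (C := C) (K := K) hM
  have hle : ∀ x ≠ 0, rfun M C K x ≤ gam M C K := fun x hx => hub ⟨x, hx, rfl⟩
  have hspec : ((gam M C K : ℝ) : ℂ) ∈ spectrum ℂ (phaseA M C K) := by
    rw [mem_spectrum_phaseA_iff hM hK, ← exists_mulVec_eq_zero_iff]
    exact ⟨x₀, hx₀, Kpen_mulVec_eq_zero_of_rfun_eq hM hC.isHermitian hK.isHermitian hle hx₀ hmax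
      (h.qf_pos hx₀)⟩
  have hbound : ∀ lam ∈ spectrum ℂ (phaseA M C K), lam.re ≤ gam M C K := by
    intro lam hlam
    rw [mem_spectrum_phaseA_iff hM hK, ← exists_mulVec_eq_zero_iff] at hlam
    obtain ⟨x, hx, hKx⟩ := hlam
    exact (re_le_rfun_of_Kpen_mulVec_eq_zero hM hC.isHermitian hK.isHermitian hx hKx).trans
      (hle x hx)
  have habscissa : IsGreatest {r : ℝ | ∃ lam ∈ spectrum ℂ (phaseA M C K), lam.re = r}
      (gam M C K) :=
    ⟨⟨_, hspec, Complex.ofReal_re _⟩, fun _ ⟨lam, hlam, hr⟩ => hr ▸ hbound lam hlam⟩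
  exact ⟨hspec, hbound, habscissa.csSup_eq.symm⟩
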